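/- arXiv:2102.09879 — 2 statements merged into one kernel-verified Lean document; each statement's English description precedes it below -/
import Mathlib

section
/- Let G = (V,E) be a finite undirected simple graph with N vertices, injective positive edge weights, and (unique) minimum spanning forest T. Let V_n ⊆ V be any subset of vertices, let G_n = (V_n, E_n) be the subgraph of G induced by V_n, and let T_n be the (unique) minimum spanning forest of G_n. Then T ∩ (E_n \ T_n) = ∅; equivalently, every edge of the induced subgraph that is not in the sample MSF T_n is also not in the population MSF T, so that E_n \ T_n = E_n \ (T ∪ T_n). -/
/-! Suppose an edge `e = s(u, v)` of `Eₙ \ Tₙ` lies in `T`. Removing `e` from `T` separates `u`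
from `v`, so the `Tₙ`-path from `u` to `v` crosses this cut at some edge `f`. Exchanging `e` for
`f` in `T` yields a spanning forest of `G`, hence `w e ≤ w f`; since `f` lies on the `Tₙ`-path
closing a cycle with `e`, exchanging `f` for `e` in `Tₙ` yields a spanning forest of `Gₙ`, hence
`w f ≤ w e`. Injectivity of `w` gives `e = f ∈ Tₙ`, a contradiction. -/

/-- `T` is a spanning forest of `G`: an acyclic set `T` of edges of `G` such that any two
vertices lying in the same connected component of `G` are joined by a path using only
edges of `T`. -/
def IsSpanningForest {V : Type*} (G : SimpleGraph V) (T : Finset (Sym2 V)) : Prop :=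
  (T : Set (Sym2 V)) ⊆ G.edgeSet ∧
    (SimpleGraph.fromEdgeSet (T : Set (Sym2 V))).IsAcyclic ∧
    ∀ u v : V, G.Reachable u v → (SimpleGraph.fromEdgeSet (T : Set (Sym2 V))).Reachable u v

/-- `T` is a minimum spanning forest of `G` with respect to the weights `w`. -/
def IsMSF {V : Type*} (G : SimpleGraph V) (w : Sym2 V → ℝ) (T : Finset (Sym2 V)) : Prop :=
  IsSpanningForest G T ∧
    ∀ T' : Finset (Sym2 V), IsSpanningForest G T' → ∑ e ∈ T, w e ≤ ∑ e ∈ T', w e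

namespace SimpleGraph

variable {V : Type*} {G H : SimpleGraph V} {u v x y a b : V}

theorem Reachable.of_deleteEdges_le (hxy : G.Reachable x y) (hGH : G.deleteEdges {s(u, v)} ≤ H)
    (huv : H.Reachable u v) : H.Reachable x y := by
  rw [reachable_iff_reflTransGen] at hxy ⊢
  refine Relation.reflTransGen_closed (fun c d hcd => ?_) x y hxy
  rw [← reachable_iff_reflTransGen]
  by_cases hcd' : s(c, d) = s(u, v)
  · rcases Sym2.eq_iff.mp hcd' with ⟨rfl, rfl⟩ | ⟨rfl, rfl⟩
    exacts [huv, huv.symm]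
  · exact (hGH (deleteEdges_adj.mpr ⟨hcd, hcd'⟩)).reachable

theorem Reachable.deleteEdges_or (h : G.Reachable x u) (v : V) :
    (G.deleteEdges {s(u, v)}).Reachable x u ∨ (G.deleteEdges {s(u, v)}).Reachable x v := by
  classical
  obtain ⟨p, hp⟩ := h.exists_isPath
  by_cases he : s(u, v) ∈ p.edges
  · have hv := p.snd_mem_support_of_mem_edges he
    have hu := Walk.endpoint_notMem_support_takeUntil hp hv (p.adj_of_mem_edges he).ne
    exact .inr ⟨(p.takeUntil v hv).toDeleteEdge _
      fun he' => hu ((p.takeUntil v hv).fst_mem_support_of_mem_edges he')⟩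
  · exact .inl ⟨p.toDeleteEdge _ he⟩

theorem Walk.exists_boundary_append (p : G.Walk u v) (S : Set V) (hu : u ∈ S) (hv : v ∉ S) :
    ∃ (a b : V) (q : G.Walk u a) (hab : G.Adj a b) (r : G.Walk b v),
      p = q.append (cons hab r) ∧ a ∈ S ∧ b ∉ S := by
  induction p with
  | nil => exact absurd hu hv
  | @cons u c v huc p ih =>
    by_cases hc : c ∈ S
    · obtain ⟨a, b, q, hab, r, rfl, ha, hb⟩ := ih hc hv
      exact ⟨a, b, cons huc q, hab, r, rfl, ha, hb⟩
    · exact ⟨u, c, nil, huc, p, rfl, hu, hc⟩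

theorem Walk.IsPath.reachable_deleteEdges_of_append_cons {q : G.Walk u a} {hab : G.Adj a b}
    {r : G.Walk b v} (hp : (q.append (cons hab r)).IsPath) :
    (G.deleteEdges {s(a, b)}).Reachable u a ∧ (G.deleteEdges {s(a, b)}).Reachable b v := by
  have hnd := hp.isTrail.edges_nodup
  rw [edges_append, edges_cons, List.nodup_append, List.nodup_cons] at hnd
  exact ⟨⟨q.toDeleteEdge _ fun h => hnd.2.2 _ h _ List.mem_cons_self rfl⟩,
    ⟨r.toDeleteEdge _ hnd.2.1.1⟩⟩

theorem IsAcyclic.not_reachable_deleteEdges (hG : G.IsAcyclic) (huv : G.Adj u v)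
    (hua : (G.deleteEdges {s(u, v)}).Reachable u a)
    (hvb : (G.deleteEdges {s(u, v)}).Reachable v b) :
    ¬ (G.deleteEdges {s(u, v)}).Reachable a b := fun hab =>
  isBridge_iff.mp (isAcyclic_iff_forall_isBridge.mp hG huv) ((hua.trans hab).trans hvb.symm)

end SimpleGraph

open SimpleGraph Finset

section Exchange

variable {V : Type*} {G : SimpleGraph V} {T : Finset (Sym2 V)} {u v a b : V}

theorem IsSpanningForest.fromEdgeSet_le (hT : IsSpanningForest G T) :
    fromEdgeSet (T : Set (Sym2 V)) ≤ G :=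
  fun _ _ h => hT.1 ((fromEdgeSet_adj _).mp h).1

theorem IsSpanningForest.adj_of_mem (hT : IsSpanningForest G T) (he : s(u, v) ∈ T) :
    (fromEdgeSet (T : Set (Sym2 V))).Adj u v :=
  (fromEdgeSet_adj _).mpr ⟨he, (hT.1 he : G.Adj u v).ne⟩

variable [DecidableEq V]

theorem fromEdgeSet_coe_erase (T : Finset (Sym2 V)) (e : Sym2 V) :
    fromEdgeSet ((T.erase e : Finset (Sym2 V)) : Set (Sym2 V)) =
      (fromEdgeSet (T : Set (Sym2 V))).deleteEdges {e} := by
  rw [coe_erase, fromEdgeSet_sdiff]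
  rfl

theorem fromEdgeSet_coe_insert (T : Finset (Sym2 V)) (a b : V) :
    fromEdgeSet ((insert s(a, b) T : Finset (Sym2 V)) : Set (Sym2 V)) =
      fromEdgeSet (T : Set (Sym2 V)) ⊔ edge a b := by
  rw [coe_insert, Set.insert_eq, fromEdgeSet_union, sup_comm]
  rfl

theorem IsSpanningForest.exchange (hT : IsSpanningForest G T) (he : s(u, v) ∈ T) (hab : G.Adj a b)
    (hua : ((fromEdgeSet (T : Set (Sym2 V))).deleteEdges {s(u, v)}).Reachable u a)
    (hvb : ((fromEdgeSet (T : Set (Sym2 V))).deleteEdges {s(u, v)}).Reachable v b) :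
    IsSpanningForest G (insert s(a, b) (T.erase s(u, v))) := by
  rw [IsSpanningForest, fromEdgeSet_coe_insert, fromEdgeSet_coe_erase, coe_insert, coe_erase]
  refine ⟨Set.insert_subset hab (Set.sdiff_subset.trans hT.1), ?_, fun x y hxy => ?_⟩
  · exact (hT.2.1.anti (deleteEdges_le _)).sup_edge_of_not_reachable
      (hT.2.1.not_reachable_deleteEdges (hT.adj_of_mem he) hua hvb)
  · have hab' : (edge a b).Adj a b := (edge_adj a b a b).mpr ⟨.inl ⟨rfl, rfl⟩, hab.ne⟩
    refine (hT.2.2 x y hxy).of_deleteEdges_le le_sup_left ?_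
    exact ((hua.mono le_sup_left).trans (hab'.reachable.mono le_sup_right)).trans
      (hvb.mono le_sup_left).symm

theorem IsMSF.weight_le_of_exchange {w : Sym2 V → ℝ} (hT : IsMSF G w T) (he : s(u, v) ∈ T)
    (hab : G.Adj a b)
    (hua : ((fromEdgeSet (T : Set (Sym2 V))).deleteEdges {s(u, v)}).Reachable u a)
    (hvb : ((fromEdgeSet (T : Set (Sym2 V))).deleteEdges {s(u, v)}).Reachable v b) :
    w s(u, v) ≤ w s(a, b) := by
  have hab' : s(a, b) ∉ T.erase s(u, v) := fun h =>
    hT.1.2.1.not_reachable_deleteEdges (hT.1.adj_of_mem he) hua hvb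
      (fromEdgeSet_coe_erase T _ ▸ (fromEdgeSet_adj _).mpr ⟨h, hab.ne⟩).reachable
  have hmin := hT.2 _ (hT.1.exchange he hab hua hvb)
  rw [sum_insert hab', sum_erase_eq_sub he] at hmin
  linarith

theorem IsMSF.notMem_of_isMSF_of_le {H : SimpleGraph V} {w : Sym2 V → ℝ}
    (hinj : Set.InjOn w G.edgeSet) (hT : IsMSF G w T) (hHG : H ≤ G) {S : Finset (Sym2 V)}
    (hS : IsMSF H w S) {e : Sym2 V} (heH : e ∈ H.edgeSet) (heS : e ∉ S) : e ∉ T := by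
  induction e using Sym2.ind with | _ u v => ?_
  intro heT
  have huv : H.Adj u v := heH
  set F₀ := (fromEdgeSet (T : Set (Sym2 V))).deleteEdges {s(u, v)}
  have hsep : ¬ F₀.Reachable u v :=
    isBridge_iff.mp (isAcyclic_iff_forall_isBridge.mp hT.1.2.1 (hT.1.adj_of_mem heT))
  obtain ⟨p, hp⟩ := (hS.1.2.2 u v huv.reachable).exists_isPath
  obtain ⟨a, b, q, hab, r, rfl, hua, hub⟩ :=
    p.exists_boundary_append {x | F₀.Reachable u x} (Reachable.refl u) hsep
  have habS : s(a, b) ∈ S := ((fromEdgeSet_adj _).mp hab).1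
  have habG : G.Adj a b := hHG (hS.1.1 habS)
  have hvb : F₀.Reachable v b := by
    have hbu : G.Reachable b u := ⟨(q.concat hab).reverse.mapLe (hS.1.fromEdgeSet_le.trans hHG)⟩
    exact ((hT.1.2.2 b u hbu).deleteEdges_or v).resolve_left (fun h => hub h.symm) |>.symm
  obtain ⟨hua', hbv'⟩ := hp.reachable_deleteEdges_of_append_cons
  have h₁ : w s(u, v) ≤ w s(a, b) := hT.weight_le_of_exchange heT habG hua hvb
  have h₂ : w s(a, b) ≤ w s(u, v) := hS.weight_le_of_exchange habS huv hua'.symm hbv'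
  exact heS (hinj habG (hHG huv) (le_antisymm h₂ h₁) ▸ habS)

end Exchange

theorem mst_inter_sample_nonMst_empty_general {V : Type*} [DecidableEq V]
    (G : SimpleGraph V) (w : Sym2 V → ℝ)
    (hinj : Set.InjOn w G.edgeSet)
    (T : Finset (Sym2 V)) (hT : IsMSF G w T)
    (Vn : Finset V) (En : Finset (Sym2 V))
    (hEn : (En : Set (Sym2 V)) = {e ∈ G.edgeSet | ∀ v ∈ e, v ∈ Vn})
    (Tn : Finset (Sym2 V))
    (hTn : IsMSF (SimpleGraph.fromEdgeSet (En : Set (Sym2 V))) w Tn) :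
    T ∩ (En \ Tn) = ∅ ∧ En \ Tn = En \ (T ∪ Tn) := by
  have hEnG : (En : Set (Sym2 V)) ⊆ G.edgeSet := hEn ▸ Set.sep_subset _ _
  have hle : fromEdgeSet (En : Set (Sym2 V)) ≤ G := fun _ _ h => hEnG ((fromEdgeSet_adj _).mp h).1
  have key : ∀ e ∈ En, e ∉ Tn → e ∉ T := fun e he => hT.notMem_of_isMSF_of_le hinj hle hTn
    (by rw [edgeSet_fromEdgeSet]; exact ⟨he, G.not_isDiag_of_mem_edgeSet (hEnG he)⟩)
  constructor
  · ext e
    simp only [mem_inter, mem_sdiff, notMem_empty, iff_false]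
    exact fun ⟨heT, heEn, heTn⟩ => key e heEn heTn heT
  · ext e
    simp only [mem_sdiff, mem_union, not_or]
    exact ⟨fun ⟨heEn, heTn⟩ => ⟨heEn, key e heEn heTn, heTn⟩,
      fun ⟨heEn, _, heTn⟩ => ⟨heEn, heTn⟩⟩

/-- If `T` is the MSF of a finite graph `G` with distinct positive edge weights,
`Vₙ` is any subset of the vertices, `Eₙ` is the edge set of the subgraph of `G` induced
by `Vₙ`, and `Tₙ` is the MSF of that induced subgraph, then no edge of `Eₙ \ Tₙ` lies in
`T`; equivalently `Eₙ \ Tₙ = Eₙ \ (T ∪ Tₙ)`. -/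
theorem mst_inter_sample_nonMst_empty {V : Type*} [Fintype V] [DecidableEq V]
    (G : SimpleGraph V) (w : Sym2 V → ℝ)
    (hpos : ∀ e ∈ G.edgeSet, 0 < w e)
    (hinj : Set.InjOn w G.edgeSet)
    (T : Finset (Sym2 V)) (hT : IsMSF G w T)
    (Vn : Finset V) (En : Finset (Sym2 V))
    (hEn : (En : Set (Sym2 V)) = {e ∈ G.edgeSet | ∀ v ∈ e, v ∈ Vn})
    (Tn : Finset (Sym2 V))
    (hTn : IsMSF (SimpleGraph.fromEdgeSet (En : Set (Sym2 V))) w Tn) :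
    T ∩ (En \ Tn) = ∅ ∧ En \ Tn = En \ (T ∪ Tn) :=
  mst_inter_sample_nonMst_empty_general G w hinj T hT Vn En hEn Tn hTn
end

section
/- Let G = (V,E) be a finite connected weighted undirected simple graph having more than one minimum spanning tree, and let A and B be two distinct minimum spanning trees of G. Then there exists a bijection g : A \ B → B \ A such that for every a ∈ A \ B: (i) w(a) = w(g(a)); (ii) a and g(a) both belong to a cycle C ⊆ B ∪ {a} in which a and g(a) have the maximum weight among all edges of C; and (iii) a and g(a) both belong to a cut D ⊆ E in which a and g(a) have the minimum weight among all edges of D. -/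
/-!
Let `a = s(u, v) ∈ A \ B`. Deleting `a` from `A` leaves two components; let `S` be the
one containing `u`. Every edge of the cut `(S, Sᶜ)` can replace `a` in `A`, so `a` is lightest
in that cut. The path from `u` to `v` in `B` leaves `S` along some edge `b ∉ A`, and each edge
of that path can be replaced by `a` in `B`, so `a` is heaviest on the cycle formed by the path
and `a`. Hence `w a = w b`, the tree `A - a + b` is again minimum and shares one more edge with
`B`, and induction on `|A \ B|` assembles the pairs `(a, b)` into the bijection.
-/

/-- `T` is a spanning tree of `G`: an acyclic set of edges of `G` such that every vertex
is an endpoint of some edge in `T` and the graph `(V, T)` is connected. -/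
def IsSpanningTree {V : Type*} (G : SimpleGraph V) (T : Finset (Sym2 V)) : Prop :=
  (T : Set (Sym2 V)) ⊆ G.edgeSet ∧
    (∀ v : V, ∃ e ∈ T, v ∈ e) ∧
    (SimpleGraph.fromEdgeSet (T : Set (Sym2 V))).IsAcyclic ∧
    (SimpleGraph.fromEdgeSet (T : Set (Sym2 V))).Connected

/-- `T` is a minimum spanning tree of `G` with respect to the weights `w`. -/
def IsMST {V : Type*} (G : SimpleGraph V) (w : Sym2 V → ℝ) (T : Finset (Sym2 V)) : Prop :=
  IsSpanningTree G T ∧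
    ∀ T' : Finset (Sym2 V), IsSpanningTree G T' → ∑ e ∈ T, w e ≤ ∑ e ∈ T', w e

/-- `C` is (the edge set of) a cycle of `G`: the set of edges traversed by some closed
walk of `G` through distinct vertices. -/
def IsCycleEdgeSet {V : Type*} (G : SimpleGraph V) (C : Set (Sym2 V)) : Prop :=
  ∃ (v : V) (p : G.Walk v v), p.IsCycle ∧ C = {e | e ∈ p.edges}

/-- `D` is a cut of `G`: the set of edges of `G` having one endpoint in `V₁` and the
other in its complement, for some nonempty proper vertex set `V₁`. -/
def IsCutEdgeSet {V : Type*} (G : SimpleGraph V) (D : Set (Sym2 V)) : Prop :=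
  ∃ V₁ : Set V, V₁.Nonempty ∧ V₁ᶜ.Nonempty ∧
    D = {e ∈ G.edgeSet | ∃ u v : V, e = s(u, v) ∧ u ∈ V₁ ∧ v ∈ V₁ᶜ}


namespace Finset
variable {α : Type*} [DecidableEq α]

theorem exists_equiv_of_exists_equiv_erase {s t : Finset α} {a b : α} (ha : a ∈ s)
    (hb : b ∈ t) {P : α → α → Prop} (hab : P a b)
    (he : ∃ e : ↑(s.erase a) ≃ ↑(t.erase b), ∀ x : ↑(s.erase a), P x (e x)) :
    ∃ g : ↑s ≃ ↑t, ∀ x : ↑s, P x (g x) := by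
  obtain ⟨e, he⟩ := he
  rw [← insert_erase ha, ← insert_erase hb]
  refine ⟨(subtypeInsertEquivOption (notMem_erase a s)).trans
    ((e.optionCongr).trans (subtypeInsertEquivOption (notMem_erase b t)).symm), ?_⟩
  rintro ⟨x, hx⟩
  by_cases hxa : x = a
  · subst hxa
    simpa [subtypeInsertEquivOption] using hab
  · simpa [subtypeInsertEquivOption, hxa] using he ⟨x, (mem_insert.1 hx).resolve_left hxa⟩

theorem exists_equiv_sdiff_of_exchange {p : Finset α → Prop} {P : α → α → Prop}
    {B : Finset α} (hsub : ∀ A, p A → A ⊆ B → B ⊆ A)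
    (hexch : ∀ A, p A → ∀ a ∈ A, a ∉ B →
      ∃ b ∈ B, b ∉ A ∧ p (insert b (A.erase a)) ∧ P a b)
    {A : Finset α} (hA : p A) :
    ∃ g : ↑(A \ B) ≃ ↑(B \ A), ∀ x : ↑(A \ B), P x (g x) := by
  induction hn : #(A \ B) generalizing A with
  | zero =>
    have hAB : A ⊆ B := sdiff_eq_empty_iff_subset.1 (card_eq_zero.1 hn)
    have := isEmpty_coe_sort.2 (sdiff_eq_empty_iff_subset.2 hAB)
    have := isEmpty_coe_sort.2 (sdiff_eq_empty_iff_subset.2 (hsub A hA hAB))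
    exact ⟨Equiv.equivOfIsEmpty _ _, fun x => isEmptyElim x⟩
  | succ n ih =>
    obtain ⟨a, haAB⟩ := card_pos.1 (show 0 < #(A \ B) by omega)
    obtain ⟨haA, haB⟩ := mem_sdiff.1 haAB
    obtain ⟨b, hbB, hbA, hA', hab⟩ := hexch A hA a haA haB
    have hAB' : insert b (A.erase a) \ B = (A \ B).erase a := by
      rw [insert_sdiff_of_mem _ hbB, erase_sdiff_comm]
    have hBA' : B \ insert b (A.erase a) = (B \ A).erase b := by grind
    have := ih hA' (by rw [hAB', card_erase_of_mem haAB, hn, Nat.add_sub_cancel])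
    rw [hAB', hBA'] at this
    exact exists_equiv_of_exists_equiv_erase haAB (mem_sdiff.2 ⟨hbB, hbA⟩) hab this

end Finset

namespace SimpleGraph
variable {V : Type*} {G H : SimpleGraph V} {u v x y : V}

theorem Connected.reachable_deleteEdges_or (hH : H.Connected) (z : V) :
    (H.deleteEdges {s(u, v)}).Reachable z u ∨ (H.deleteEdges {s(u, v)}).Reachable z v := by
  classical
  simp only [reachable_deleteEdges_iff_exists_walk]
  obtain ⟨p, hp⟩ := hH.exists_isPath z u
  by_cases huv : s(u, v) ∈ p.edges
  · have hv := p.snd_mem_support_of_mem_edges huv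
    have hu := Walk.endpoint_notMem_support_takeUntil hp hv (p.adj_of_mem_edges huv).ne
    exact .inr ⟨_, fun h => hu ((p.takeUntil v hv).fst_mem_support_of_mem_edges h)⟩
  · exact .inl ⟨p, huv⟩

theorem IsTree.deleteEdges_sup_edge {e : Sym2 V} (hH : H.IsTree)
    (hxy : ¬ (H.deleteEdges {e}).Reachable x y) : (H.deleteEdges {e} ⊔ edge x y).IsTree := by
  induction e with | h u v =>
  set K := H.deleteEdges {s(u, v)}
  refine ⟨?_, (hH.isAcyclic.anti (deleteEdges_le _)).sup_edge_of_not_reachable hxy⟩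
  have hK : K ≤ K ⊔ edge x y := le_sup_left
  have hne : x ≠ y := by rintro rfl; exact hxy .rfl
  have hxy' : (K ⊔ edge x y).Reachable x y := Adj.reachable (by simp [edge_adj, hne])
  have huv : (K ⊔ edge x y).Reachable u v := by
    rcases hH.1.reachable_deleteEdges_or x with hx | hx <;>
    rcases hH.1.reachable_deleteEdges_or y with hy | hy
    · exact absurd (hx.trans hy.symm) hxy
    · exact (hx.mono hK).symm.trans (hxy'.trans (hy.mono hK))
    · exact (hy.mono hK).symm.trans (hxy'.symm.trans (hx.mono hK))
    · exact absurd (hx.trans hy.symm) hxy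
  refine (connected_iff_exists_forall_reachable _).2 ⟨u, fun z => ?_⟩
  rcases hH.1.reachable_deleteEdges_or z with hz | hz
  · exact (hz.mono hK).symm
  · exact huv.trans (hz.mono hK).symm

theorem IsAcyclic.not_reachable_deleteEdges_of_mem_edges (hH : H.IsAcyclic) {p : H.Walk u v}
    (hp : p.IsPath) {e : Sym2 V} (he : e ∈ p.edges) : ¬ (H.deleteEdges {e}).Reachable u v := by
  classical
  induction e with | h a b =>
  rw [reachable_deleteEdges_iff_exists_walk]
  rintro ⟨q, hq⟩
  have : q.toPath = ⟨p, hp⟩ := (hH.subsingleton_path u v).elim _ _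
  exact hq (q.edges_toPath_subset_edges (by rw [this]; exact he))

theorem Walk.mem_of_mem_edges_fromEdgeSet {s : Set (Sym2 V)} {e : Sym2 V}
    (p : (fromEdgeSet s).Walk u v) (he : e ∈ p.edges) : e ∈ s :=
  ((edgeSet_fromEdgeSet s ▸ p.edges_subset_edgeSet he) : e ∈ s \ Sym2.diagSet).1

theorem Walk.IsPath.isCycleEdgeSet_insert (hHG : H ≤ G) {p : H.Walk u v} (hp : p.IsPath)
    (huv : G.Adj u v) (hnot : s(u, v) ∉ p.edges) :
    IsCycleEdgeSet G (insert s(u, v) {e | e ∈ p.edges}) := by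
  refine ⟨v, .cons huv.symm (p.mapLe hHG), (Walk.cons_isCycle_iff _ _).2 ⟨?_, ?_⟩, ?_⟩
  · simpa
  · simpa [Walk.edges_mapLe_eq_edges, Sym2.eq_swap] using hnot
  · ext; simp [Sym2.eq_swap]

end SimpleGraph

open SimpleGraph Finset

section SpanningTrees
variable {V : Type*} [DecidableEq V] {G : SimpleGraph V} {w : Sym2 V → ℝ}
  {T : Finset (Sym2 V)} {e : Sym2 V} {x y : V}

theorem SimpleGraph.fromEdgeSet_insert_erase :
    fromEdgeSet (↑(insert s(x, y) (T.erase e)) : Set (Sym2 V)) =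
      (fromEdgeSet ↑T).deleteEdges {e} ⊔ edge x y := by
  ext a b
  simp only [coe_insert, coe_erase, deleteEdges_fromEdgeSet, edge, sup_adj, fromEdgeSet_adj,
    Set.mem_insert_iff, Set.mem_sdiff, Set.mem_singleton_iff, mem_coe]
  tauto

theorem mk_notMem_erase_of_not_reachable
    (hsep : ¬ ((fromEdgeSet ↑T).deleteEdges {e}).Reachable x y) : s(x, y) ∉ T.erase e := by
  intro h
  refine hsep (Adj.reachable ?_)
  rw [deleteEdges_fromEdgeSet, fromEdgeSet_adj]
  refine ⟨⟨mem_of_mem_erase h, ne_of_mem_erase h⟩, ?_⟩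
  rintro rfl
  exact hsep .rfl

theorem sum_insert_erase_of_not_reachable (he : e ∈ T)
    (hsep : ¬ ((fromEdgeSet ↑T).deleteEdges {e}).Reachable x y) :
    ∑ f ∈ insert s(x, y) (T.erase e), w f = ∑ f ∈ T, w f - w e + w s(x, y) := by
  rw [sum_insert (mk_notMem_erase_of_not_reachable hsep), ← sum_erase_add _ _ he]
  ring

theorem IsSpanningTree.exchange (hT : IsSpanningTree G T) (hxy : s(x, y) ∈ G.edgeSet)
    (hsep : ¬ ((fromEdgeSet ↑T).deleteEdges {e}).Reachable x y) :
    IsSpanningTree G (insert s(x, y) (T.erase e)) := by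
  obtain ⟨hTG, -, hac, hconn⟩ := hT
  have htree : (fromEdgeSet (↑(insert s(x, y) (T.erase e)) : Set (Sym2 V))).IsTree := by
    rw [fromEdgeSet_insert_erase]
    exact IsTree.deleteEdges_sup_edge ⟨hconn, hac⟩ hsep
  have : Nontrivial V := ⟨x, y, G.ne_of_adj hxy⟩
  refine ⟨?_, fun z => ?_, htree.2, htree.1⟩
  · rw [coe_insert, coe_erase]
    exact Set.insert_subset hxy (Set.sdiff_subset.trans hTG)
  · obtain ⟨z', hz'⟩ := htree.1.preconnected.exists_adj_of_nontrivial z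
    exact ⟨s(z, z'), ((fromEdgeSet_adj _).1 hz').1, Sym2.mem_mk_left _ _⟩

theorem IsSpanningTree.subset_of_subset {T' : Finset (Sym2 V)} (hT : IsSpanningTree G T)
    (hT' : IsSpanningTree G T') (h : T ⊆ T') : T' ⊆ T := by
  intro f hf
  by_contra hfT
  induction f with | h x y =>
  have hadj : (fromEdgeSet ↑T').Adj x y := (fromEdgeSet_adj _).2 ⟨hf, G.ne_of_adj (hT'.1 hf)⟩
  refine isBridge_iff.1 (isAcyclic_iff_forall_adj_isBridge.1 hT'.2.2.1 hadj) ?_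
  refine (hT.2.2.2.preconnected x y).mono ?_
  rw [deleteEdges_fromEdgeSet]
  exact fromEdgeSet_mono fun f hf' => ⟨h hf', fun hfxy => hfT (hfxy ▸ hf')⟩

theorem IsMST.le_of_exchange (hT : IsMST G w T) (he : e ∈ T) (hxy : s(x, y) ∈ G.edgeSet)
    (hsep : ¬ ((fromEdgeSet ↑T).deleteEdges {e}).Reachable x y) : w e ≤ w s(x, y) := by
  have := hT.2 _ (hT.1.exchange hxy hsep)
  rw [sum_insert_erase_of_not_reachable he hsep] at this
  linarith

theorem IsMST.exchange (hT : IsMST G w T) (he : e ∈ T) (hxy : s(x, y) ∈ G.edgeSet)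
    (hsep : ¬ ((fromEdgeSet ↑T).deleteEdges {e}).Reachable x y) (hw : w s(x, y) ≤ w e) :
    IsMST G w (insert s(x, y) (T.erase e)) := by
  refine ⟨hT.1.exchange hxy hsep, fun T' hT' => ?_⟩
  rw [sum_insert_erase_of_not_reachable he hsep]
  linarith [hT.2 T' hT']

end SpanningTrees

section Exchange
variable {V : Type*} [DecidableEq V] {G : SimpleGraph V} {w : Sym2 V → ℝ}
  {A B : Finset (Sym2 V)} {u v : V}

def cutEdges (G : SimpleGraph V) (S : Set V) : Set (Sym2 V) :=
  {e ∈ G.edgeSet | ∃ u v : V, e = s(u, v) ∧ u ∈ S ∧ v ∈ Sᶜ}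

def IsExchangePair (G : SimpleGraph V) (w : Sym2 V → ℝ) (B : Finset (Sym2 V)) (a b : Sym2 V) :
    Prop :=
  w a = w b ∧
    (∃ C : Set (Sym2 V), IsCycleEdgeSet G C ∧ C ⊆ (B : Set (Sym2 V)) ∪ {a} ∧
      a ∈ C ∧ b ∈ C ∧ ∀ c ∈ C, w c ≤ w a) ∧
    (∃ D : Set (Sym2 V), IsCutEdgeSet G D ∧ a ∈ D ∧ b ∈ D ∧ ∀ d ∈ D, w a ≤ w d)

theorem IsMST.le_of_mem_cutEdges (hA : IsMST G w A) (ha : s(u, v) ∈ A) {d : Sym2 V}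
    (hd : d ∈ cutEdges G {z | ((fromEdgeSet ↑A).deleteEdges {s(u, v)}).Reachable z u}) :
    w s(u, v) ≤ w d := by
  obtain ⟨hdG, x, y, rfl, hx, hy⟩ := hd
  exact hA.le_of_exchange ha hdG fun hxy => hy (hxy.symm.trans hx)

theorem IsMST.le_of_mem_edges_of_isPath (hB : IsMST G w B) {p : (fromEdgeSet ↑B).Walk u v}
    (hp : p.IsPath) (huv : s(u, v) ∈ G.edgeSet) {c : Sym2 V} (hc : c ∈ p.edges) :
    w c ≤ w s(u, v) :=
  hB.le_of_exchange (p.mem_of_mem_edges_fromEdgeSet hc) huv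
    (hB.1.2.2.1.not_reachable_deleteEdges_of_mem_edges hp hc)

theorem IsMST.exists_isExchangePair (hA : IsMST G w A) (hB : IsMST G w B) {a : Sym2 V}
    (haA : a ∈ A) (haB : a ∉ B) :
    ∃ b ∈ B, b ∉ A ∧ IsMST G w (insert b (A.erase a)) ∧ IsExchangePair G w B a b := by
  induction a with | h u v =>
  have huvG : s(u, v) ∈ G.edgeSet := hA.1.1 haA
  set S : Set V := {z | ((fromEdgeSet ↑A).deleteEdges {s(u, v)}).Reachable z u}
  have hu : u ∈ S := .rfl
  have hv : v ∉ S := fun h => isBridge_iff.1 (isAcyclic_iff_forall_adj_isBridge.1 hA.1.2.2.1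
    ((fromEdgeSet_adj _).2 ⟨haA, G.ne_of_adj huvG⟩)) h.symm
  obtain ⟨p, hp⟩ := hB.1.2.2.2.exists_isPath u v
  obtain ⟨⟨⟨x, y⟩, hxy⟩, hdp, hx, hy⟩ := p.exists_boundary_dart S hu hv
  have hbp : s(x, y) ∈ p.edges := by
    rw [p.edges_eq_map_darts]
    exact List.mem_map_of_mem hdp
  have hbB : s(x, y) ∈ B := p.mem_of_mem_edges_fromEdgeSet hbp
  have hbD : s(x, y) ∈ cutEdges G S := ⟨hB.1.1 hbB, x, y, rfl, hx, hy⟩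
  have hsep : ¬ ((fromEdgeSet ↑A).deleteEdges {s(u, v)}).Reachable x y :=
    fun h => hy (h.symm.trans hx)
  have hw : w s(u, v) = w s(x, y) :=
    le_antisymm (hA.le_of_mem_cutEdges haA hbD) (hB.le_of_mem_edges_of_isPath hp huvG hbp)
  have hbA : s(x, y) ∉ A := fun h => mk_notMem_erase_of_not_reachable hsep
    (mem_erase.2 ⟨ne_of_mem_of_not_mem hbB haB, h⟩)
  refine ⟨s(x, y), hbB, hbA, hA.exchange haA (hB.1.1 hbB) hsep hw.ge, hw, ?_,
    ⟨cutEdges G S, ⟨S, ⟨u, hu⟩, ⟨v, hv⟩, rfl⟩, ⟨huvG, u, v, rfl, hu, hv⟩, hbD,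
      fun d hd => hA.le_of_mem_cutEdges haA hd⟩⟩
  have hupB : ∀ c ∈ p.edges, c ∈ B := fun c hc => p.mem_of_mem_edges_fromEdgeSet hc
  refine ⟨insert s(u, v) {c | c ∈ p.edges}, hp.isCycleEdgeSet_insert ?_ huvG ?_,
    ?_, Set.mem_insert _ _, Set.mem_insert_of_mem _ hbp, ?_⟩
  · exact (fromEdgeSet_le G).2 (Set.sdiff_subset.trans hB.1.1)
  · exact fun h => haB (hupB _ h)
  · exact Set.insert_subset (.inr rfl) fun c hc => .inl (hupB c hc)
  · rintro c (rfl | hc)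
    · exact le_rfl
    · exact hB.le_of_mem_edges_of_isPath hp huvG hc

end Exchange

theorem mst_exchange_bijection_general {V : Type*} [DecidableEq V]
    (G : SimpleGraph V) (w : Sym2 V → ℝ)
    (A B : Finset (Sym2 V)) (hA : IsMST G w A) (hB : IsMST G w B) :
    ∃ g : ↑(A \ B : Finset (Sym2 V)) → ↑(B \ A : Finset (Sym2 V)),
      Function.Bijective g ∧
      ∀ a : ↑(A \ B : Finset (Sym2 V)),
        w (a : Sym2 V) = w ((g a : Sym2 V)) ∧
        (∃ C : Set (Sym2 V), IsCycleEdgeSet G C ∧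
          C ⊆ (B : Set (Sym2 V)) ∪ {(a : Sym2 V)} ∧
          (a : Sym2 V) ∈ C ∧ ((g a : Sym2 V)) ∈ C ∧
          ∀ c ∈ C, w c ≤ w (a : Sym2 V)) ∧
        (∃ D : Set (Sym2 V), IsCutEdgeSet G D ∧
          (a : Sym2 V) ∈ D ∧ ((g a : Sym2 V)) ∈ D ∧
          ∀ d ∈ D, w (a : Sym2 V) ≤ w d) := by
  obtain ⟨g, hg⟩ := exists_equiv_sdiff_of_exchange (p := IsMST G w) (P := IsExchangePair G w B)
    (fun A' hA' => hA'.1.subset_of_subset hB.1)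
    (fun A' hA' a haA haB => hA'.exists_isExchangePair hB haA haB) hA
  exact ⟨g, g.bijective, hg⟩

/-- If a finite connected weighted graph has two distinct MSTs `A` and `B`, then there is
a bijection `g : A \ B → B \ A` such that each `a` and `g a` have the same weight, lie
together on a cycle `C ⊆ B ∪ {a}` on which they have maximum weight, and lie together in
a cut `D ⊆ E` in which they have minimum weight. -/
theorem mst_exchange_bijection {V : Type*} [Fintype V] [DecidableEq V]
    (G : SimpleGraph V) (hG : G.Connected) (w : Sym2 V → ℝ)
    (hpos : ∀ e ∈ G.edgeSet, 0 < w e)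
    (A B : Finset (Sym2 V)) (hA : IsMST G w A) (hB : IsMST G w B) (hAB : A ≠ B) :
    ∃ g : ↑(A \ B : Finset (Sym2 V)) → ↑(B \ A : Finset (Sym2 V)),
      Function.Bijective g ∧
      ∀ a : ↑(A \ B : Finset (Sym2 V)),
        w (a : Sym2 V) = w ((g a : Sym2 V)) ∧
        (∃ C : Set (Sym2 V), IsCycleEdgeSet G C ∧
          C ⊆ (B : Set (Sym2 V)) ∪ {(a : Sym2 V)} ∧
          (a : Sym2 V) ∈ C ∧ ((g a : Sym2 V)) ∈ C ∧
          ∀ c ∈ C, w c ≤ w (a : Sym2 V)) ∧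
        (∃ D : Set (Sym2 V), IsCutEdgeSet G D ∧
          (a : Sym2 V) ∈ D ∧ ((g a : Sym2 V)) ∈ D ∧
          ∀ d ∈ D, w (a : Sym2 V) ≤ w d) :=
  mst_exchange_bijection_general G w A B hA hB
end
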